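/- arXiv:1005.4937 — 4 statements merged into one kernel-verified Lean document; each statement's English description precedes it below -/
import Mathlib

section
/- For x ≠ 0 in ℝⁿ, the operator norm of the derivative of the inversion J(x) = x/‖x‖² equals 1/‖x‖². -/
/-!
`y ↦ y / ‖y‖²` is the inversion in the unit sphere about the origin. The derivative of the
inversion with centre `c` and radius `R` at `x ≠ c` is `(R / dist x c)²` times the reflection in
the hyperplane orthogonal to `x - c`, and a reflection is an isometry, so it has operator norm `1`.
-/

namespace EuclideanGeometry

variable {E : Type*} [NormedAddCommGroup E] [InnerProductSpace ℝ E]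

theorem inversion_zero_one : inversion (0 : E) 1 = fun y => (‖y‖ ^ 2)⁻¹ • y := by
  funext y
  simp [inversion]

theorem norm_fderiv_inversion_of_ne {c x : E} (R : ℝ) (hx : x ≠ c) :
    ‖fderiv ℝ (inversion c R) x‖ = (R / dist x c) ^ 2 := by
  have : Nontrivial E := nontrivial_of_ne x c hx
  rw [(hasFDerivAt_inversion hx).fderiv, norm_smul, LinearIsometryEquiv.norm_toContinuousLinearMap,
    mul_one, Real.norm_of_nonneg (sq_nonneg _)]

end EuclideanGeometry

open EuclideanGeometry in
/-- The operator norm of the derivative of the inversion `J(x) = x/‖x‖²` at `x ≠ 0`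
equals `1/‖x‖²`. -/
theorem norm_fderiv_inversion {n : ℕ} (x : EuclideanSpace ℝ (Fin n)) (hx : x ≠ 0) :
    ‖fderiv ℝ (fun y : EuclideanSpace ℝ (Fin n) => (‖y‖ ^ 2)⁻¹ • y) x‖ = (‖x‖ ^ 2)⁻¹ := by
  rw [← inversion_zero_one, norm_fderiv_inversion_of_ne 1 hx, dist_zero_right, div_pow, one_pow,
    one_div]
end

section
/- Let φ : (a,b) → ℝⁿ be a C³ curve with φ'(x) ≠ 0, let v(x) = ‖φ'(x)‖ and let κ(x) be the curvature of the curve at φ(x). Then the Ahlfors Schwarzian S₁φ = ⟨φ''',φ'⟩/‖φ'‖² − 3⟨φ'',φ'⟩²/‖φ'‖⁴ + (3/2)‖φ''‖²/‖φ'‖² satisfies S₁φ = (v'/v)' − (1/2)(v'/v)² + (1/2) v² κ². -/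
/-!
Writing `γ = φ'` and `r = ‖γ‖`, differentiating `r² = ⟪γ, γ⟫` gives `r r' = ⟪γ, γ'⟫`, so
`v'/v = ⟪γ, γ'⟫ / r²` can be differentiated explicitly. The derivative of the unit tangent
`γ / r` is `(γ' - (r'/r) γ) / r`, the normal part of `γ'` divided by `r`, whence
`v² κ² = ‖T'‖² = ‖γ'‖²/r² - ⟪γ, γ'⟫²/r⁴`. Substituting both into the right-hand side
gives the Ahlfors Schwarzian.
-/

open RealInnerProductSpace Set Filter

variable {F : Type*} [NormedAddCommGroup F] [InnerProductSpace ℝ F]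

theorem HasDerivAt.norm_mul_eq_inner {f : ℝ → F} {f' : F} {d x : ℝ}
    (hf : HasDerivAt f f' x) (hd : HasDerivAt (‖f ·‖) d x) : ‖f x‖ * d = ⟪f x, f'⟫ := by
  have h := (hd.pow 2).unique hf.norm_sq
  norm_num at h
  linarith

theorem hasDerivAt_inner_div_norm_sq {f f' : ℝ → F} {f'' : F} {x : ℝ}
    (hf : HasDerivAt f (f' x) x) (hf' : HasDerivAt f' f'' x) (h0 : f x ≠ 0) :
    HasDerivAt (fun t => ⟪f t, f' t⟫ / ‖f t‖ ^ 2)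
      ((⟪f x, f''⟫ + ‖f' x‖ ^ 2) / ‖f x‖ ^ 2 - 2 * ⟪f x, f' x⟫ ^ 2 / ‖f x‖ ^ 4) x := by
  have hr : ‖f x‖ ≠ 0 := norm_ne_zero_iff.mpr h0
  refine ((hf.inner ℝ hf').div hf.norm_sq (pow_ne_zero 2 hr)).congr_deriv ?_
  rw [real_inner_self_eq_norm_sq]
  field_simp

theorem norm_sq_of_hasDerivAt_unit_tangent {f : ℝ → F} {f' T' : F} {x : ℝ}
    (hf : HasDerivAt f f' x) (hT : HasDerivAt (fun t => ‖f t‖⁻¹ • f t) T' x) (h0 : f x ≠ 0) :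
    ‖T'‖ ^ 2 = ‖f'‖ ^ 2 / ‖f x‖ ^ 2 - ⟪f x, f'⟫ ^ 2 / ‖f x‖ ^ 4 := by
  have hr : ‖f x‖ ≠ 0 := norm_ne_zero_iff.mpr h0
  have hd : HasDerivAt (‖f ·‖) (deriv (‖f ·‖) x) x :=
    (hf.differentiableAt.norm ℝ h0).hasDerivAt
  set d := deriv (‖f ·‖) x
  have hrd : ‖f x‖ * d = ⟪f x, f'⟫ := hf.norm_mul_eq_inner hd
  have hT' : T' = ‖f x‖⁻¹ • f' + (-d / ‖f x‖ ^ 2) • f x :=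
    hT.unique ((hd.inv hr).smul hf)
  rw [hT']
  simp only [norm_add_sq_real, norm_smul, mul_pow, Real.norm_eq_abs, sq_abs,
    real_inner_smul_left, real_inner_smul_right]
  rw [real_inner_comm (f x) f', ← hrd]
  field_simp
  ring

theorem ahlfors_schwarzian_eq_general {n : ℕ} {a b : ℝ}
    (φ' φ'' φ''' : ℝ → EuclideanSpace ℝ (Fin n))
    (hd2 : ∀ x ∈ Ioo a b, HasDerivAt φ' (φ'' x) x)
    (hd3 : ∀ x ∈ Ioo a b, HasDerivAt φ'' (φ''' x) x)
    (hne : ∀ x ∈ Ioo a b, φ' x ≠ 0)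
    (v v' q : ℝ → ℝ) (hv : ∀ x, v x = ‖φ' x‖)
    (hv' : ∀ x ∈ Ioo a b, HasDerivAt v (v' x) x)
    (hq : ∀ x ∈ Ioo a b, HasDerivAt (fun y => v' y / v y) (q x) x)
    (T' : ℝ → EuclideanSpace ℝ (Fin n))
    (hT : ∀ x ∈ Ioo a b, HasDerivAt (fun y => (v y)⁻¹ • φ' y) (T' x) x)
    (κ : ℝ → ℝ) (hκ : ∀ x, κ x = ‖T' x‖ / v x) :
    ∀ x ∈ Ioo a b,
      ⟪φ''' x, φ' x⟫ / ‖φ' x‖ ^ 2 - 3 * ⟪φ'' x, φ' x⟫ ^ 2 / ‖φ' x‖ ^ 4 +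
          (3 / 2) * ‖φ'' x‖ ^ 2 / ‖φ' x‖ ^ 2 =
        q x - (1 / 2) * (v' x / v x) ^ 2 + (1 / 2) * (v x) ^ 2 * (κ x) ^ 2 := by
  obtain rfl : v = (‖φ' ·‖) := funext hv
  beta_reduce at hq hT hκ ⊢
  have hlog : ∀ y ∈ Ioo a b, v' y / ‖φ' y‖ = ⟪φ' y, φ'' y⟫ / ‖φ' y‖ ^ 2 := fun y hy => by
    have hr : ‖φ' y‖ ≠ 0 := norm_ne_zero_iff.mpr (hne y hy)
    rw [← (hd2 y hy).norm_mul_eq_inner (hv' y hy)]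
    field_simp
  intro x hx
  have hr : ‖φ' x‖ ≠ 0 := norm_ne_zero_iff.mpr (hne x hx)
  have hqx : q x = (⟪φ' x, φ''' x⟫ + ‖φ'' x‖ ^ 2) / ‖φ' x‖ ^ 2
      - 2 * ⟪φ' x, φ'' x⟫ ^ 2 / ‖φ' x‖ ^ 4 :=
    (hq x hx).unique <| (hasDerivAt_inner_div_norm_sq (hd2 x hx) (hd3 x hx) (hne x hx))
      |>.congr_of_eventuallyEq <| eventually_of_mem (isOpen_Ioo.mem_nhds hx) hlog
  have hTx := norm_sq_of_hasDerivAt_unit_tangent (hd2 x hx) (hT x hx) (hne x hx)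
  rw [hκ, hqx, hlog x hx, div_pow ‖T' x‖, hTx, real_inner_comm (φ' x), real_inner_comm (φ' x)]
  field_simp
  ring

/-- Chuaqui–Gevirtz identity: for a C³ curve `φ : (a,b) → ℝⁿ` with `φ' ≠ 0`, speed
`v = ‖φ'‖` and Frenet curvature `κ = ‖T'‖/v` (where `T = φ'/v` is the unit tangent),
the Ahlfors Schwarzian
`S₁φ = ⟨φ''',φ'⟩/‖φ'‖² − 3⟨φ'',φ'⟩²/‖φ'‖⁴ + (3/2)‖φ''‖²/‖φ'‖²`
equals `(v'/v)' − (1/2)(v'/v)² + (1/2)v²κ²`. -/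
theorem ahlfors_schwarzian_eq {n : ℕ} {a b : ℝ}
    (φ φ' φ'' φ''' : ℝ → EuclideanSpace ℝ (Fin n))
    (hφ : ContDiffOn ℝ 3 φ (Ioo a b))
    (hd1 : ∀ x ∈ Ioo a b, HasDerivAt φ (φ' x) x)
    (hd2 : ∀ x ∈ Ioo a b, HasDerivAt φ' (φ'' x) x)
    (hd3 : ∀ x ∈ Ioo a b, HasDerivAt φ'' (φ''' x) x)
    (hne : ∀ x ∈ Ioo a b, φ' x ≠ 0)
    (v v' q : ℝ → ℝ) (hv : ∀ x, v x = ‖φ' x‖)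
    (hv' : ∀ x ∈ Ioo a b, HasDerivAt v (v' x) x)
    (hq : ∀ x ∈ Ioo a b, HasDerivAt (fun y => v' y / v y) (q x) x)
    (T' : ℝ → EuclideanSpace ℝ (Fin n))
    (hT : ∀ x ∈ Ioo a b, HasDerivAt (fun y => (v y)⁻¹ • φ' y) (T' x) x)
    (κ : ℝ → ℝ) (hκ : ∀ x, κ x = ‖T' x‖ / v x) :
    ∀ x ∈ Ioo a b,
      ⟪φ''' x, φ' x⟫ / ‖φ' x‖ ^ 2 - 3 * ⟪φ'' x, φ' x⟫ ^ 2 / ‖φ' x‖ ^ 4 +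
          (3 / 2) * ‖φ'' x‖ ^ 2 / ‖φ' x‖ ^ 2 =
        q x - (1 / 2) * (v' x / v x) ^ 2 + (1 / 2) * (v x) ^ 2 * (κ x) ^ 2 :=
  ahlfors_schwarzian_eq_general φ' φ'' φ''' hd2 hd3 hne v v' q hv hv' hq T' hT κ hκ
end

section
/- Let v : (−1,1) → (0,∞) be C², and suppose (v'/v)' − (1/2)(v'/v)² ≤ 2/(1−x²)² on (−1,1). Set V = v^{−1/2} and W(x) = V(x)/√(1−x²). Then W, reparametrized by hyperbolic arclength s = (1/2)log((1+x)/(1−x)), is convex, i.e. (d²/ds²) W(x(s)) ≥ 0. -/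
open Set Real

/-! Since `1 - tanh² s = cosh⁻² s`, the function is `exp ∘ g` with
`g s = log (cosh s) - log (v (tanh s)) / 2`, and `exp ∘ g` is convex as soon as `g'' + g'² ≥ 0`.
Writing `x = tanh s`, `y = 1 - x²` and `r = v'/v`, one computes `g' = x - r y / 2`,
`g'' = y (1 - q y / 2 + r x)`, hence `g'' + g'² = 1 - y² (q - r² / 2) / 2`, which is
nonnegative exactly under the bound `q - r² / 2 ≤ 2 / y²`. -/

namespace Real

theorem tanh_eq_exp_two_mul (x : ℝ) : tanh x = (exp (2 * x) - 1) / (exp (2 * x) + 1) := by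
  rw [tanh_eq, exp_neg, two_mul, exp_add]
  field_simp

theorem one_sub_tanh_sq (x : ℝ) : 1 - tanh x ^ 2 = (cosh x ^ 2)⁻¹ := by
  rw [tanh_eq_sinh_div_cosh, div_pow, one_sub_div (pow_ne_zero 2 (cosh_pos x).ne'),
    cosh_sq_sub_sinh_sq, one_div]

theorem tanh_mem_Ioo (x : ℝ) : tanh x ∈ Ioo (-1 : ℝ) 1 :=
  ⟨neg_one_lt_tanh x, tanh_lt_one x⟩

theorem sqrt_one_sub_tanh_sq (x : ℝ) : √(1 - tanh x ^ 2) = (cosh x)⁻¹ := by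
  rw [one_sub_tanh_sq, ← inv_pow, sqrt_sq (inv_nonneg.2 (cosh_pos x).le)]

theorem hasDerivAt_tanh (x : ℝ) : HasDerivAt tanh (1 - tanh x ^ 2) x := by
  have hcosh := (cosh_pos x).ne'
  rw [show tanh = sinh / cosh from funext tanh_eq_sinh_div_cosh]
  refine ((hasDerivAt_sinh x).div (hasDerivAt_cosh x) hcosh).congr_deriv ?_
  rw [Pi.div_apply]
  field_simp

end Real

theorem convexOn_univ_exp_comp {g g' g'' : ℝ → ℝ} (hg : ∀ s, HasDerivAt g (g' s) s)
    (hg' : ∀ s, HasDerivAt g' (g'' s) s) (hnonneg : ∀ s, 0 ≤ g'' s + g' s ^ 2) :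
    ConvexOn ℝ univ (fun s => exp (g s)) := by
  have hd : ∀ s, HasDerivAt (fun s => exp (g s)) (exp (g s) * g' s) s := fun s => (hg s).exp
  have hd2 : ∀ s, HasDerivAt (fun s => exp (g s) * g' s) (exp (g s) * (g'' s + g' s ^ 2)) s :=
    fun s => ((hd s).mul (hg' s)).congr_deriv (by ring)
  refine convexOn_of_hasDerivWithinAt2_nonneg convex_univ
    (fun s _ => (hd s).continuousAt.continuousWithinAt) (fun s _ => (hd s).hasDerivWithinAt)
    (fun s _ => (hd2 s).hasDerivWithinAt) (fun s _ => ?_)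
  exact mul_nonneg (exp_pos _).le (hnonneg s)

theorem exp_log_cosh_sub_half_log {a : ℝ} (ha : 0 < a) (s : ℝ) :
    exp (log (cosh s) - log a / 2) = 1 / √a / √(1 - tanh s ^ 2) := by
  rw [exp_sub, exp_log (cosh_pos s), exp_half, exp_log ha, sqrt_one_sub_tanh_sq]
  field_simp

theorem nonneg_of_sub_half_sq_le_two_div_one_sub_sq_sq {x r q : ℝ} (hx : x ∈ Ioo (-1 : ℝ) 1)
    (hbound : q - (1 / 2) * r ^ 2 ≤ 2 / (1 - x ^ 2) ^ 2) :
    0 ≤ (1 - x ^ 2) * (1 - q * (1 - x ^ 2) / 2 + r * x) + (x - r * (1 - x ^ 2) / 2) ^ 2 := by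
  have hy : 0 < (1 - x ^ 2) ^ 2 := by
    have : x ^ 2 < 1 := by nlinarith [hx.1, hx.2]
    positivity
  have h := (le_div_iff₀ hy).1 hbound
  calc 0 ≤ 1 - (q - (1 / 2) * r ^ 2) * (1 - x ^ 2) ^ 2 / 2 := by linarith
    _ = _ := by ring

theorem hasDerivAt_log_cosh_sub_half_log_comp_tanh {v v' : ℝ → ℝ}
    (hpos : ∀ x ∈ Ioo (-1 : ℝ) 1, 0 < v x) (hv : ∀ x ∈ Ioo (-1 : ℝ) 1, HasDerivAt v (v' x) x)
    (s : ℝ) :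
    HasDerivAt (fun t => log (cosh t) - log (v (tanh t)) / 2)
      (tanh s - v' (tanh s) / v (tanh s) * (1 - tanh s ^ 2) / 2) s := by
  have hlog_cosh := (hasDerivAt_cosh s).log (cosh_pos s).ne'
  have hlog_v :=
    ((hv _ (tanh_mem_Ioo s)).comp s (hasDerivAt_tanh s)).log (hpos _ (tanh_mem_Ioo s)).ne'
  refine (hlog_cosh.sub (hlog_v.div_const 2)).congr_deriv ?_
  rw [Function.comp_apply, ← tanh_eq_sinh_div_cosh]
  ring

theorem hasDerivAt_tanh_sub_half_mul_one_sub_tanh_sq_comp_tanh {r q : ℝ → ℝ}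
    (hr : ∀ x ∈ Ioo (-1 : ℝ) 1, HasDerivAt r (q x) x) (s : ℝ) :
    HasDerivAt (fun t => tanh t - r (tanh t) * (1 - tanh t ^ 2) / 2)
      ((1 - tanh s ^ 2) * (1 - q (tanh s) * (1 - tanh s ^ 2) / 2 + r (tanh s) * tanh s)) s := by
  have hr_tanh := (hr _ (tanh_mem_Ioo s)).comp s (hasDerivAt_tanh s)
  have hy := ((hasDerivAt_tanh s).pow 2).const_sub 1
  refine ((hasDerivAt_tanh s).sub ((hr_tanh.mul hy).div_const 2)).congr_deriv ?_
  simp only [Function.comp_apply, Pi.pow_apply, Nat.cast_ofNat]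
  ring

theorem hyperbolic_convexity_of_schwarzian_bound_general
    (v v' q : ℝ → ℝ)
    (hpos : ∀ x ∈ Ioo (-1 : ℝ) 1, 0 < v x)
    (hd1 : ∀ x ∈ Ioo (-1 : ℝ) 1, HasDerivAt v (v' x) x)
    (hd2 : ∀ x ∈ Ioo (-1 : ℝ) 1, HasDerivAt (fun y => v' y / v y) (q x) x)
    (hbound : ∀ x ∈ Ioo (-1 : ℝ) 1,
      q x - (1 / 2) * (v' x / v x) ^ 2 ≤ 2 / (1 - x ^ 2) ^ 2) :
    ConvexOn ℝ univ
      (fun s : ℝ =>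
        (1 / Real.sqrt (v ((Real.exp (2 * s) - 1) / (Real.exp (2 * s) + 1)))) /
          Real.sqrt (1 - ((Real.exp (2 * s) - 1) / (Real.exp (2 * s) + 1)) ^ 2)) := by
  simp_rw [← tanh_eq_exp_two_mul, ← exp_log_cosh_sub_half_log (hpos _ (tanh_mem_Ioo _))]
  exact convexOn_univ_exp_comp (hasDerivAt_log_cosh_sub_half_log_comp_tanh hpos hd1)
    (hasDerivAt_tanh_sub_half_mul_one_sub_tanh_sq_comp_tanh hd2)
    fun s => nonneg_of_sub_half_sq_le_two_div_one_sub_sq_sq (tanh_mem_Ioo s)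
      (hbound _ (tanh_mem_Ioo s))

/-- If `v > 0` is C² on `(−1,1)` with `(v'/v)' − (1/2)(v'/v)² ≤ 2/(1−x²)²`, then
`W(x) = v(x)^{-1/2}/√(1−x²)`, reparametrized by hyperbolic arclength
`x(s) = (e^{2s}−1)/(e^{2s}+1)`, is convex. -/
theorem hyperbolic_convexity_of_schwarzian_bound
    (v v' q : ℝ → ℝ)
    (hv : ContDiffOn ℝ 2 v (Ioo (-1 : ℝ) 1))
    (hpos : ∀ x ∈ Ioo (-1 : ℝ) 1, 0 < v x)
    (hd1 : ∀ x ∈ Ioo (-1 : ℝ) 1, HasDerivAt v (v' x) x)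
    (hd2 : ∀ x ∈ Ioo (-1 : ℝ) 1, HasDerivAt (fun y => v' y / v y) (q x) x)
    (hbound : ∀ x ∈ Ioo (-1 : ℝ) 1,
      q x - (1 / 2) * (v' x / v x) ^ 2 ≤ 2 / (1 - x ^ 2) ^ 2) :
    ConvexOn ℝ univ
      (fun s : ℝ =>
        (1 / Real.sqrt (v ((Real.exp (2 * s) - 1) / (Real.exp (2 * s) + 1)))) /
          Real.sqrt (1 - ((Real.exp (2 * s) - 1) / (Real.exp (2 * s) + 1)) ^ 2)) :=
  hyperbolic_convexity_of_schwarzian_bound_general v v' q hpos hd1 hd2 hbound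
end

section
/- Let σ : 𝔻 → ℝ be C² on the unit disk with σ_z(0) = 0 and satisfying |σ_{zz}(z) − σ_z(z)²| + 2|σ_{z\bar z}(z)| ≤ 1/(1−|z|²)² for all z ∈ 𝔻. Then ‖∇σ(z)‖ ≤ 2|z|/(1−|z|²) for all z ∈ 𝔻. -/
/-!
Along a ray `t ↦ t ω` with `‖ω‖ = 1`, the function `k t = σ_z (t ω)` has derivative
`σ_{zz} ω + σ_{z z̄} ω̄`, so the hypothesis gives the Riccati inequality
`‖k'‖ ≤ (1 - t²)⁻² + ‖k‖²` with `k 0 = 0`. Its comparison solution `b t = t / (1 - t²)` satisfies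
`b' = (1 - t²)⁻² + b²` and `b 0 = 0`; the barriers `b + δ exp (M (t - r))` are strict
supersolutions for a suitable `M`, so `‖k‖ ≤ b + δ` for every `δ > 0`. Finally `‖∇σ‖ ≤ 2 ‖σ_z‖`.
-/

open Complex Metric

/-- Wirtinger derivative `∂/∂z` of a real-valued function on ℂ. -/
noncomputable def wirtingerZReal (σ : ℂ → ℝ) (z : ℂ) : ℂ :=
  ((fderiv ℝ σ z 1 : ℝ) - Complex.I * (fderiv ℝ σ z Complex.I : ℝ)) / 2

/-- Wirtinger derivative `∂/∂z` of a complex-valued function on ℂ. -/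
noncomputable def wirtingerZ (g : ℂ → ℂ) (z : ℂ) : ℂ :=
  (fderiv ℝ g z 1 - Complex.I * fderiv ℝ g z Complex.I) / 2

/-- Wirtinger derivative `∂/∂z̄` of a complex-valued function on ℂ. -/
noncomputable def wirtingerZBar (g : ℂ → ℂ) (z : ℂ) : ℂ :=
  (fderiv ℝ g z 1 + Complex.I * fderiv ℝ g z Complex.I) / 2

open ComplexConjugate

lemma ContinuousLinearMap.apply_eq_re_mul (L : ℂ →L[ℝ] ℝ) (v : ℂ) :
    L v = (((L 1 : ℂ) - I * L I) * v).re := by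
  rw [show v = v.re • (1 : ℂ) + v.im • I by apply Complex.ext <;> simp, map_add, map_smul, map_smul]
  simp [mul_comm]

lemma ContinuousLinearMap.apply_eq_mul_add_mul_conj (L : ℂ →L[ℝ] ℂ) (v : ℂ) :
    L v = (L 1 - I * L I) / 2 * v + (L 1 + I * L I) / 2 * conj v := by
  rw [show v = v.re • (1 : ℂ) + v.im • I by apply Complex.ext <;> simp, map_add, map_smul, map_smul]
  simp only [real_smul, map_add, map_mul, conj_ofReal, conj_I, map_one]
  ring_nf
  simp only [I_sq]
  ring

lemma differentiableOn_wirtingerZReal {σ : ℂ → ℝ} {s : Set ℂ} (hσ : ContDiffOn ℝ 2 σ s)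
    (hs : IsOpen s) :
    DifferentiableOn ℝ (wirtingerZReal σ) s := by
  have h : DifferentiableOn ℝ (fderiv ℝ σ) s :=
    (hσ.fderiv_of_isOpen hs (by norm_num : (1 : WithTop ℕ∞) + 1 ≤ 2)).differentiableOn one_ne_zero
  have hre (v : ℂ) : DifferentiableOn ℝ (fun z => (fderiv ℝ σ z v : ℂ)) s :=
    ofRealCLM.differentiable.comp_differentiableOn (h.clm_apply (differentiableOn_const v))
  unfold wirtingerZReal
  simp only [div_eq_mul_inv]
  fun_prop

open Set

noncomputable def radialBound (x : ℝ) : ℝ := x / (1 - x ^ 2)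

lemma radialBound_nonneg {x : ℝ} (hx0 : 0 ≤ x) (hx1 : x < 1) : 0 ≤ radialBound x :=
  div_nonneg hx0 (by nlinarith)

lemma monotoneOn_radialBound : MonotoneOn radialBound (Ioo (-1) 1) := by
  intro x ⟨hx1, hx2⟩ y ⟨hy1, hy2⟩ hxy
  rw [radialBound, radialBound, div_le_div_iff₀ (by nlinarith) (by nlinarith)]
  nlinarith [mul_nonneg (sub_nonneg.mpr hxy) (show 0 ≤ 1 + x * y by nlinarith)]

lemma hasDerivAt_radialBound {x : ℝ} (hx : 1 - x ^ 2 ≠ 0) :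
    HasDerivAt radialBound (1 / (1 - x ^ 2) ^ 2 + radialBound x ^ 2) x := by
  have hq : HasDerivAt (fun x : ℝ => 1 - x ^ 2) (-(2 * x)) x := by
    simpa using (hasDerivAt_pow 2 x).const_sub 1
  refine ((hasDerivAt_id' x).div hq hx).congr_deriv ?_
  rw [radialBound]
  field_simp
  ring

section Riccati

variable {E : Type*} [NormedAddCommGroup E] [NormedSpace ℝ E] {f f' : ℝ → E} {r : ℝ}

lemma norm_le_radialBound_add_of_norm_deriv_le (hr0 : 0 ≤ r) (hr1 : r < 1) {δ : ℝ} (hδ : 0 < δ)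
    (hf0 : f 0 = 0) (hf : ContinuousOn f (Icc 0 r))
    (hf' : ∀ x ∈ Ico 0 r, HasDerivWithinAt f (f' x) (Ici x) x)
    (hbound : ∀ x ∈ Ico 0 r, ‖f' x‖ ≤ 1 / (1 - x ^ 2) ^ 2 + ‖f x‖ ^ 2) :
    ‖f r‖ ≤ radialBound r + δ := by
  -- `M` exceeds `2 * radialBound x + δ * exp (M * (x - r))` on `[0, r]`, so `B` is a strict
  -- supersolution of the Riccati inequality.
  set M := 2 * radialBound r + δ + 1
  set B : ℝ → ℝ := fun x => radialBound x + δ * Real.exp (M * (x - r))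
  have hM : 0 < M := by have := radialBound_nonneg hr0 hr1; positivity
  have hden {x : ℝ} (hx : x ∈ Icc 0 r) : 1 - x ^ 2 ≠ 0 := by nlinarith [hx.1, hx.2]
  have hB {x : ℝ} (hx : x ∈ Icc 0 r) :
      HasDerivAt B
        (1 / (1 - x ^ 2) ^ 2 + radialBound x ^ 2 + δ * (Real.exp (M * (x - r)) * M)) x := by
    refine (hasDerivAt_radialBound (hden hx)).add (HasDerivAt.const_mul δ ?_)
    simpa using ((hasDerivAt_id x).sub_const r).const_mul M |>.exp
  have hfB := image_norm_le_of_norm_deriv_right_lt_deriv_boundary' hf hf' (B := B)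
    ?_ (fun x hx => (hB hx).continuousAt.continuousWithinAt)
    (fun x hx => (hB (Ico_subset_Icc_self hx)).hasDerivWithinAt) ?_ (right_mem_Icc.mpr hr0)
  · simpa [B] using hfB
  · simp only [B, hf0, norm_zero, radialBound, zero_pow two_ne_zero, sub_zero, zero_div, zero_add]
    positivity
  · intro x hx hfx
    have hb : radialBound x ≤ radialBound r := monotoneOn_radialBound
      ⟨by linarith [hx.1], by linarith [hx.2]⟩ ⟨by linarith, hr1⟩ hx.2.le
    have he : Real.exp (M * (x - r)) ≤ 1 := Real.exp_le_one_iff.mpr (by nlinarith [hx.2])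
    have he0 : 0 < Real.exp (M * (x - r)) := Real.exp_pos _
    have hlt : 2 * radialBound x + δ * Real.exp (M * (x - r)) < M := by
      have : δ * Real.exp (M * (x - r)) ≤ δ := mul_le_of_le_one_right hδ.le he
      linarith
    calc ‖f' x‖ ≤ 1 / (1 - x ^ 2) ^ 2 + ‖f x‖ ^ 2 := hbound x hx
      _ < _ := by
        rw [hfx]
        nlinarith [mul_lt_mul_of_pos_left hlt (mul_pos hδ he0)]

lemma norm_le_radialBound_of_norm_deriv_le (hr0 : 0 ≤ r) (hr1 : r < 1) (hf0 : f 0 = 0)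
    (hf : ContinuousOn f (Icc 0 r)) (hf' : ∀ x ∈ Ico 0 r, HasDerivWithinAt f (f' x) (Ici x) x)
    (hbound : ∀ x ∈ Ico 0 r, ‖f' x‖ ≤ 1 / (1 - x ^ 2) ^ 2 + ‖f x‖ ^ 2) :
    ‖f r‖ ≤ radialBound r :=
  le_of_forall_pos_le_add fun _ hδ =>
    norm_le_radialBound_add_of_norm_deriv_le hr0 hr1 hδ hf0 hf hf' hbound

end Riccati

theorem DifferentiableAt.hasDerivAt_comp_smul_const {E F : Type*} [NormedAddCommGroup E]
    [NormedSpace ℝ E] [NormedAddCommGroup F] [NormedSpace ℝ F] {g : E → F} {v : E} {t : ℝ}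
    (hg : DifferentiableAt ℝ g (t • v)) :
    HasDerivAt (fun t : ℝ => g (t • v)) (fderiv ℝ g (t • v) v) t := by
  have hline : HasDerivAt (fun t : ℝ => t • v) v t := by
    simpa using (hasDerivAt_id t).smul_const v
  exact hg.hasFDerivAt.comp_hasDerivAt t hline

lemma norm_fderiv_le_two_mul_norm_wirtingerZReal (σ : ℂ → ℝ) (z : ℂ) :
    ‖fderiv ℝ σ z‖ ≤ 2 * ‖wirtingerZReal σ z‖ := by
  have h : ((fderiv ℝ σ z 1 : ℂ) - I * fderiv ℝ σ z I) = 2 * wirtingerZReal σ z := by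
    rw [wirtingerZReal]; ring
  refine (fderiv ℝ σ z).opNorm_le_bound (by positivity) fun v => ?_
  rw [ContinuousLinearMap.apply_eq_re_mul, h, Real.norm_eq_abs]
  exact (abs_re_le_norm _).trans_eq (by rw [norm_mul, norm_mul, Complex.norm_two])

lemma fderiv_apply_eq_wirtingerZ_mul_add (g : ℂ → ℂ) (z v : ℂ) :
    fderiv ℝ g z v = wirtingerZ g z * v + wirtingerZBar g z * conj v :=
  (fderiv ℝ g z).apply_eq_mul_add_mul_conj v

lemma norm_fderiv_apply_le_of_riccati {g : ℂ → ℂ} {w ω : ℂ} {C : ℝ} (hω : ‖ω‖ = 1)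
    (h : ‖wirtingerZ g w - g w ^ 2‖ + 2 * ‖wirtingerZBar g w‖ ≤ C) :
    ‖fderiv ℝ g w ω‖ ≤ C + ‖g w‖ ^ 2 := by
  have hZ := norm_sub_norm_le (wirtingerZ g w) (g w ^ 2)
  rw [norm_pow] at hZ
  calc ‖fderiv ℝ g w ω‖ ≤ ‖wirtingerZ g w * ω‖ + ‖wirtingerZBar g w * conj ω‖ :=
        fderiv_apply_eq_wirtingerZ_mul_add g w ω ▸ norm_add_le _ _
    _ = ‖wirtingerZ g w‖ + ‖wirtingerZBar g w‖ := by simp [hω]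
    _ ≤ C + ‖g w‖ ^ 2 := by linarith [norm_nonneg (wirtingerZBar g w)]

/-- If `σ` is C² on the unit disk with `σ_z(0) = 0` and
`|σ_{zz} − σ_z²| + 2|σ_{z z̄}| ≤ 1/(1−|z|²)²`, then `‖∇σ(z)‖ ≤ 2|z|/(1−|z|²)`. -/
theorem grad_sigma_bound (σ : ℂ → ℝ)
    (hσ : ContDiffOn ℝ 2 σ (ball (0 : ℂ) 1))
    (hcrit : wirtingerZReal σ 0 = 0)
    (hbound : ∀ z ∈ ball (0 : ℂ) 1,
      ‖wirtingerZ (wirtingerZReal σ) z - (wirtingerZReal σ z) ^ 2‖ +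
          2 * ‖wirtingerZBar (wirtingerZReal σ) z‖ ≤ 1 / (1 - ‖z‖ ^ 2) ^ 2) :
    ∀ z ∈ ball (0 : ℂ) 1, ‖fderiv ℝ σ z‖ ≤ 2 * ‖z‖ / (1 - ‖z‖ ^ 2) := by
  intro z hz
  set k := wirtingerZReal σ
  set ω := exp (arg z * I)
  have hω : ‖ω‖ = 1 := norm_exp_ofReal_mul_I _
  have hnorm {t : ℝ} (ht : t ∈ Icc 0 ‖z‖) : ‖t • ω‖ = t := by
    rw [norm_smul, hω, mul_one, Real.norm_of_nonneg ht.1]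
  have hray {t : ℝ} (ht : t ∈ Icc 0 ‖z‖) : t • ω ∈ ball (0 : ℂ) 1 := by
    rw [mem_ball_zero_iff, hnorm ht]; exact ht.2.trans_lt (mem_ball_zero_iff.mp hz)
  have hderiv {t : ℝ} (ht : t ∈ Icc 0 ‖z‖) :
      HasDerivAt (fun t : ℝ => k (t • ω)) (fderiv ℝ k (t • ω) ω) t :=
    ((differentiableOn_wirtingerZReal hσ isOpen_ball).differentiableAt
      (isOpen_ball.mem_nhds (hray ht))).hasDerivAt_comp_smul_const
  have hkz : ‖k (‖z‖ • ω)‖ ≤ radialBound ‖z‖ := by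
    refine norm_le_radialBound_of_norm_deriv_le (norm_nonneg z) (mem_ball_zero_iff.mp hz)
      (by simpa using hcrit) (fun t ht => (hderiv ht).continuousAt.continuousWithinAt)
      (fun t ht => (hderiv (Ico_subset_Icc_self ht)).hasDerivWithinAt) fun t ht => ?_
    have ht' := Ico_subset_Icc_self ht
    simpa only [hnorm ht'] using norm_fderiv_apply_le_of_riccati hω (hbound _ (hray ht'))
  rw [real_smul, norm_mul_exp_arg_mul_I] at hkz
  calc ‖fderiv ℝ σ z‖ ≤ 2 * ‖k z‖ := norm_fderiv_le_two_mul_norm_wirtingerZReal σ z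
    _ ≤ 2 * radialBound ‖z‖ := by gcongr
    _ = 2 * ‖z‖ / (1 - ‖z‖ ^ 2) := mul_div_assoc' _ _ _
end
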